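/- arXiv:2206.07441 — 2 statements merged into one kernel-verified Lean document; each statement's English description precedes it below -/
import Mathlib

section
/- Let M be a Mealy machine, A an NFA over I_M, and suppose (s,a) ≁ (t,b) (some word in L_A(a) ∩ L_A(b) distinguishes s and t in M) and L_A(a) ⊇ L_A(b). Then there exists α ∈ L_A(b) with |α| ≤ |S_M|·|S_A| such that λ_M(s, α) ≠ λ_M(t, α). -/
structure NFA' (X : Type) where
  S : Type
  step : S → X → Set S
  start : S

def NFA'.steps {X : Type} (A : NFA' X) : A.S → List X → Set A.S
  | s, [] => {s}
  | s, x :: w => ⋃ t ∈ A.step s x, A.steps t w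

/-- The language of a state: words on which `A` has a run starting from `s`. -/
def NFA'.lang {X : Type} (A : NFA' X) (s : A.S) : Set (List X) :=
  {w | (A.steps s w).Nonempty}

structure Mealy (I O : Type) where
  S : Type
  next : S → I → S
  out : S → I → O
  start : S

def Mealy.nexts {I O : Type} (M : Mealy I O) : M.S → List I → M.S
  | s, [] => s
  | s, x :: w => M.nexts (M.next s x) w

def Mealy.outs {I O : Type} (M : Mealy I O) : M.S → List I → List O
  | _, [] => []
  | s, x :: w => M.out s x :: M.outs (M.next s x) w

/-! For a state `q` of `A` and `k : ℕ`, call `s, t` `(q, k)`-equivalent if no word of `L_A(q)` of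
length at most `k` separates them. Separation at `(q, k + 1)` is determined by the first letter and
separation at `(q', k)` for the successors `q'`, so once the `(·, k)`- and `(·, k + 1)`-equivalences
coincide for every `q`, they stay fixed for all larger lengths. Until then the total number of
classes `∑_q |S_M / ≡_(q,k)|` grows strictly; since it is at most `|S_M|·|S_A|`, stabilisation
happens at some `k ≤ |S_M|·|S_A|`, and every separable pair is already separated by a word of
length at most `k`. -/

namespace Nat

theorem exists_le_and_succ_le_of_forall_le {f : ℕ → ℕ} {N : ℕ} (hf : ∀ k, f k ≤ N) :
    ∃ k ≤ N, f (k + 1) ≤ f k := by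
  by_contra! hlt
  have hgrow : ∀ k ≤ N + 1, k ≤ f k := by
    intro k hk
    induction k with
    | zero => exact Nat.zero_le _
    | succ k ih => exact (ih (by omega)).trans_lt (hlt k (by omega))
  have := hgrow (N + 1) le_rfl
  have := hf (N + 1)
  omega

end Nat

namespace Setoid

variable {α : Type*} {s t : Setoid α}

theorem map_of_le_surjective (h : s ≤ t) : Function.Surjective (map_of_le h) :=
  fun y => Quotient.inductionOn y fun x => ⟨Quotient.mk s x, rfl⟩

theorem card_quotient_le_of_le [Finite α] (h : s ≤ t) :
    Nat.card (Quotient t) ≤ Nat.card (Quotient s) :=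
  Nat.card_le_card_of_surjective _ (map_of_le_surjective h)

theorem eq_of_le_of_card_quotient_le [Finite α] (h : s ≤ t)
    (hcard : Nat.card (Quotient s) ≤ Nat.card (Quotient t)) : s = t := by
  have hinj := ((map_of_le_surjective h).bijective_of_nat_card_le hcard).injective
  exact le_antisymm h fun x y hxy => Quotient.exact (hinj (Quotient.sound hxy :
    map_of_le h (Quotient.mk s x) = map_of_le h (Quotient.mk s y)))

end Setoid

namespace NFA'

variable {X : Type} (A : NFA' X)

theorem nil_mem_lang (q : A.S) : [] ∈ A.lang q := ⟨q, rfl⟩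

theorem cons_mem_lang_iff {q : A.S} {x : X} {w : List X} :
    x :: w ∈ A.lang q ↔ ∃ q' ∈ A.step q x, w ∈ A.lang q' := by
  simp only [lang, Set.mem_ofPred_eq, steps, Set.nonempty_iUnion, exists_prop]

def langUpTo (q : A.S) (k : ℕ) : Set (List X) :=
  {w | w ∈ A.lang q ∧ w.length ≤ k}

theorem langUpTo_mono (q : A.S) {k m : ℕ} (hkm : k ≤ m) : A.langUpTo q k ⊆ A.langUpTo q m :=
  fun _ ⟨hw, hlen⟩ => ⟨hw, hlen.trans hkm⟩

end NFA'

namespace Mealy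

variable {I O : Type} (M : Mealy I O) (A : NFA' I)

def Separates (L : Set (List I)) (s t : M.S) : Prop :=
  ∃ α ∈ L, M.outs s α ≠ M.outs t α

def equivOn (L : Set (List I)) : Setoid M.S :=
  Setoid.ker fun s (α : L) => M.outs s α

def SeparationStableAt (k : ℕ) : Prop :=
  ∀ q s t, M.Separates (A.langUpTo q (k + 1)) s t ↔ M.Separates (A.langUpTo q k) s t

noncomputable def classCount [Fintype A.S] (k : ℕ) : ℕ :=
  ∑ q : A.S, Nat.card (Quotient (M.equivOn (A.langUpTo q k)))

variable {M A}

theorem equivOn_iff {L : Set (List I)} {s t : M.S} : M.equivOn L s t ↔ ¬ M.Separates L s t := by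
  rw [equivOn, Setoid.ker_def, funext_iff]
  simp [Separates]

theorem Separates.mono {L L' : Set (List I)} (hL : L ⊆ L') {s t : M.S} (h : M.Separates L s t) :
    M.Separates L' s t :=
  let ⟨α, hα, hne⟩ := h
  ⟨α, hL hα, hne⟩

theorem equivOn_anti {L L' : Set (List I)} (hL : L ⊆ L') : M.equivOn L' ≤ M.equivOn L :=
  fun _ _ h => equivOn_iff.mpr fun hsep => equivOn_iff.mp h (hsep.mono hL)

theorem separates_langUpTo_succ_iff {q : A.S} {k : ℕ} {s t : M.S} :
    M.Separates (A.langUpTo q (k + 1)) s t ↔ ∃ x, ∃ q' ∈ A.step q x,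
      M.out s x ≠ M.out t x ∨ M.Separates (A.langUpTo q' k) (M.next s x) (M.next t x) := by
  constructor
  · rintro ⟨_ | ⟨x, w⟩, ⟨hα, hlen⟩, hne⟩
    · exact absurd rfl hne
    obtain ⟨q', hq', hw⟩ := A.cons_mem_lang_iff.mp hα
    have hne' := not_and_or.mp (List.cons_eq_cons.not.mp hne)
    exact ⟨x, q', hq', hne'.imp id fun h => ⟨w, ⟨hw, by simpa using hlen⟩, h⟩⟩
  · rintro ⟨x, q', hq', hsep⟩
    obtain ⟨w, hw, hlen, hne⟩ : ∃ w ∈ A.lang q', w.length ≤ k ∧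
        (M.out s x ≠ M.out t x ∨ M.outs (M.next s x) w ≠ M.outs (M.next t x) w) := by
      rcases hsep with hout | ⟨w, ⟨hw, hlen⟩, hne⟩
      · exact ⟨[], A.nil_mem_lang q', Nat.zero_le k, Or.inl hout⟩
      · exact ⟨w, hw, hlen, Or.inr hne⟩
    refine ⟨x :: w, ⟨A.cons_mem_lang_iff.mpr ⟨q', hq', hw⟩, by simpa using hlen⟩, ?_⟩
    exact List.cons_eq_cons.not.mpr (not_and_or.mpr hne)

theorem SeparationStableAt.separates_add_iff {k : ℕ} (hk : M.SeparationStableAt A k)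
    (n : ℕ) (q : A.S) (s t : M.S) :
    M.Separates (A.langUpTo q (k + n)) s t ↔ M.Separates (A.langUpTo q k) s t := by
  induction n generalizing q s t with
  | zero => rfl
  | succ n ih =>
    rw [← Nat.add_assoc, separates_langUpTo_succ_iff]
    simp only [ih]
    rw [← separates_langUpTo_succ_iff, hk]

theorem SeparationStableAt.separates_langUpTo {k : ℕ} (hk : M.SeparationStableAt A k)
    {m : ℕ} {q : A.S} {s t : M.S} (h : M.Separates (A.langUpTo q m) s t) :
    M.Separates (A.langUpTo q k) s t :=
  (hk.separates_add_iff m q s t).mp (h.mono (A.langUpTo_mono q (Nat.le_add_left m k)))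

variable [Fintype A.S]

variable (M A) in
theorem classCount_le [Fintype M.S] (k : ℕ) :
    M.classCount A k ≤ Fintype.card M.S * Fintype.card A.S := by
  calc M.classCount A k ≤ ∑ _q : A.S, Fintype.card M.S :=
        Finset.sum_le_sum fun q _ => Nat.card_eq_fintype_card (α := M.S) ▸
          Nat.card_le_card_of_surjective _ Quotient.mk_surjective
    _ = Fintype.card M.S * Fintype.card A.S := by simp [mul_comm]

theorem separationStableAt_of_classCount_succ_le [Finite M.S] {k : ℕ}
    (hk : M.classCount A (k + 1) ≤ M.classCount A k) : M.SeparationStableAt A k := by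
  have hle : ∀ q ∈ Finset.univ, Nat.card (Quotient (M.equivOn (A.langUpTo q k))) ≤
      Nat.card (Quotient (M.equivOn (A.langUpTo q (k + 1)))) := fun q _ =>
    Setoid.card_quotient_le_of_le (equivOn_anti (A.langUpTo_mono q k.le_succ))
  have heq := (Finset.sum_eq_sum_iff_of_le hle).mp (le_antisymm (Finset.sum_le_sum hle) hk)
  intro q s t
  have := Setoid.eq_of_le_of_card_quotient_le (equivOn_anti (A.langUpTo_mono q k.le_succ))
    (heq q (Finset.mem_univ q)).ge
  rw [← not_iff_not, ← equivOn_iff, ← equivOn_iff, this]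

end Mealy

theorem short_distinguishing_word_pair_general {I O : Type} (M : Mealy I O) (A : NFA' I)
    [Fintype M.S] [Fintype A.S] (s t : M.S) (a b : A.S)
    (h : ∃ α ∈ A.lang a ∩ A.lang b, M.outs s α ≠ M.outs t α) :
    ∃ α ∈ A.lang b, α.length ≤ Fintype.card M.S * Fintype.card A.S ∧
      M.outs s α ≠ M.outs t α := by
  obtain ⟨α, ⟨-, hα⟩, hne⟩ := h
  obtain ⟨k, hkN, hk⟩ := Nat.exists_le_and_succ_le_of_forall_le (M.classCount_le A)
  have hsep : M.Separates (A.langUpTo b α.length) s t := ⟨α, ⟨hα, le_rfl⟩, hne⟩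
  obtain ⟨β, ⟨hβ, hlen⟩, hβne⟩ :=
    (Mealy.separationStableAt_of_classCount_succ_le hk).separates_langUpTo hsep
  exact ⟨β, hβ, hlen.trans hkN, hβne⟩

/-- Theorem 1: if (s,a) ≁ (t,b) and L_A(a) ⊇ L_A(b), then a short word of
`L_A(b)`, of length at most `|S_M|·|S_A|`, distinguishes s and t. -/
theorem short_distinguishing_word_pair {I O : Type} (M : Mealy I O) (A : NFA' I)
    [Fintype M.S] [Fintype A.S] (s t : M.S) (a b : A.S)
    (hsub : A.lang b ⊆ A.lang a)
    (h : ∃ α ∈ A.lang a ∩ A.lang b, M.outs s α ≠ M.outs t α) :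
    ∃ α ∈ A.lang b, α.length ≤ Fintype.card M.S * Fintype.card A.S ∧
      M.outs s α ≠ M.outs t α :=
  short_distinguishing_word_pair_general M A s t a b h
end

section
/- Suppose every word α ∈ L_A \ E has a prefix β ∈ E that is (k+1)-saturated with respect to E. Then E is k-complete in the context of L_A: any Mealy machine N with at most k states and the same alphabets as M that agrees with M on all words of E agrees with M on all of L_A. -/
/-- The location corresponding to a node a/α. -/
def loc {I O : Type} (M : Mealy I O) {SA : Type} (p : SA × List I) :
    M.S × SA :=
  (M.nexts M.start p.2, p.1)

/-- Incompatibility of two state pairs: some common word distinguishes them. -/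
def incompat {I O : Type} (M : Mealy I O) (A : NFA' I)
    (p q : M.S × A.S) : Prop :=
  ∃ α ∈ A.lang p.2 ∩ A.lang q.2, M.outs p.1 α ≠ M.outs q.1 α

/-- E-separability of two tests (α #_E β). -/
def sep {I O : Type} (M : Mealy I O) (E : Set (List I)) (α β : List I) : Prop :=
  ∃ γ : List I, α ++ γ ∈ E ∧ β ++ γ ∈ E ∧
    M.outs (M.nexts M.start α) γ ≠ M.outs (M.nexts M.start β) γ

/-- E is incompatibility-preserving w.r.t. a set of nodes R. -/
def incompatPres {I O : Type} (M : Mealy I O) (A : NFA' I) (E : Set (List I))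
    (R : Set (A.S × List I)) : Prop :=
  ∀ p ∈ R, ∀ q ∈ R, incompat M A (loc M p) (loc M q) → sep M E p.2 q.2

/-- Node precedence: b/β ⪯ a/α iff α = βγ and a ∈ Δ_A(b,γ). -/
def prec {X : Type} (A : NFA' X) (p q : A.S × List X) : Prop :=
  ∃ γ : List X, q.2 = p.2 ++ γ ∧ q.1 ∈ A.steps p.1 γ

/-- A node a/α is k-saturated w.r.t. E and ⊑ (`sq`): there is a monotonous
ranking of k nodes of Γ(E), all preceding a/α, w.r.t. which E is
incompatibility-preserving. -/
def saturated {I O : Type} (M : Mealy I O) (A : NFA' I) (E : Set (List I))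
    (sq : A.S → A.S → Prop) (k : ℕ) (node : A.S × List I) : Prop :=
  ∃ R : Fin k → A.S × List I,
    (∀ i, (R i).2 ∈ E ∧ (R i).1 ∈ A.steps A.start (R i).2) ∧
    (∀ i j : Fin k, i < j → (R i).2 <+: (R j).2 ∧ (R i).2 ≠ (R j).2) ∧
    (∀ i j : Fin k, i ≤ j → sq (R j).1 (R i).1) ∧
    (∀ i, prec A (R i) node) ∧
    incompatPres M A E (Set.range R)

/-!
Induction on the length of a word `γ ∈ L_A \ E`, written `γ = β η` with `β` a saturated prefix
and `a ∈ Δ_A(β)` a state from which `η` runs. A machine `N` with at most `k` states maps two of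
the `k + 1` words `α_i < α_j` of the ranking to the same state. Since `E` separates
incompatible nodes of the ranking and `N` agrees with `M` on `E`, the pairs
`(δ_M(α_i), a_i)` and `(δ_M(α_j), a_j)` are compatible; monotonicity puts the remaining suffix
`γ_j η` into `L_A(a_i)`, so on it `M` behaves after `α_j` as after `α_i`. The shorter word
`α_i γ_j η` settles the claim by induction, and `N` cannot tell `α_i` and `α_j` apart.
-/

lemma Mealy.outs_append {I O : Type} (M : Mealy I O) (s : M.S) (u v : List I) :
    M.outs s (u ++ v) = M.outs s u ++ M.outs (M.nexts s u) v := by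
  induction u generalizing s with
  | nil => rfl
  | cons x u ih => simp only [List.cons_append, Mealy.outs, Mealy.nexts, ih]

lemma NFA'.mem_steps_append {X : Type} (A : NFA' X) (s r : A.S) (u v : List X) :
    r ∈ A.steps s (u ++ v) ↔ ∃ t ∈ A.steps s u, r ∈ A.steps t v := by
  induction u generalizing s with
  | nil => simp [NFA'.steps]
  | cons x u ih =>
    simp only [List.cons_append, NFA'.steps, Set.mem_iUnion, ih]
    constructor
    · rintro ⟨t, ht, w, hw, hr⟩
      exact ⟨w, ⟨t, ht, hw⟩, hr⟩
    · rintro ⟨w, ⟨t, ht, hw⟩, hr⟩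
      exact ⟨t, ht, w, hw, hr⟩

lemma NFA'.append_mem_lang {X : Type} (A : NFA' X) (s : A.S) (u v : List X) :
    u ++ v ∈ A.lang s ↔ ∃ t ∈ A.steps s u, v ∈ A.lang t := by
  simp only [NFA'.lang, Set.mem_ofPred_eq, Set.Nonempty, A.mem_steps_append]
  exact ⟨fun ⟨r, t, ht, hr⟩ => ⟨t, ht, r, hr⟩, fun ⟨t, ht, r, hr⟩ => ⟨r, t, ht, hr⟩⟩

lemma Fin.exists_lt_apply_eq_of_card_le {β : Type*} [Finite β] {k : ℕ}
    (hk : Nat.card β ≤ k) (f : Fin (k + 1) → β) : ∃ i j, i < j ∧ f i = f j := by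
  have hf : ¬ Function.Injective f := fun hf => by
    have := Nat.card_le_card_of_injective f hf
    rw [Nat.card_fin] at this
    omega
  obtain ⟨i, j, hfij, hij⟩ : ∃ i j, f i = f j ∧ i ≠ j := by
    simpa [Function.Injective] using hf
  rcases hij.lt_or_gt with h | h
  · exact ⟨i, j, h, hfij⟩
  · exact ⟨j, i, h, hfij.symm⟩

section Agreement

variable {I O : Type} (M N : Mealy I O)

lemma Mealy.outs_nexts_eq_of_outs_eq {u v : List I}
    (huv : M.outs M.start (u ++ v) = N.outs N.start (u ++ v))
    (hu : M.outs M.start u = N.outs N.start u) :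
    M.outs (M.nexts M.start u) v = N.outs (N.nexts N.start u) v := by
  rw [Mealy.outs_append, Mealy.outs_append, hu] at huv
  exact List.append_cancel_left huv

lemma Mealy.outs_append_eq_of_nexts_eq {α α' w : List I}
    (hα : M.outs M.start α = N.outs N.start α)
    (hα' : M.outs M.start α' = N.outs N.start α')
    (hα'w : M.outs M.start (α' ++ w) = N.outs N.start (α' ++ w))
    (hN : N.nexts N.start α = N.nexts N.start α')
    (hM : M.outs (M.nexts M.start α) w = M.outs (M.nexts M.start α') w) :
    M.outs M.start (α ++ w) = N.outs N.start (α ++ w) := by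
  rw [Mealy.outs_append, Mealy.outs_append, hα, hM,
    M.outs_nexts_eq_of_outs_eq N hα'w hα', hN]

lemma nexts_ne_of_sep {E : Set (List I)} (hEpc : ∀ u v : List I, u <+: v → v ∈ E → u ∈ E)
    (hMN : ∀ γ ∈ E, M.outs M.start γ = N.outs N.start γ) {α β : List I}
    (hsep : sep M E α β) : N.nexts N.start α ≠ N.nexts N.start β := by
  obtain ⟨γ, hαγ, hβγ, hne⟩ := hsep
  intro hN
  apply hne
  rw [M.outs_nexts_eq_of_outs_eq N (hMN _ hαγ) (hMN _ (hEpc _ _ ⟨γ, rfl⟩ hαγ)),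
    M.outs_nexts_eq_of_outs_eq N (hMN _ hβγ) (hMN _ (hEpc _ _ ⟨γ, rfl⟩ hβγ)), hN]

lemma outs_eq_of_saturated {A : NFA' I} {E : Set (List I)} {sq : A.S → A.S → Prop} {k : ℕ}
    (hsq : ∀ a b : A.S, sq a b → A.lang a ⊆ A.lang b)
    (hEpc : ∀ u v : List I, u <+: v → v ∈ E → u ∈ E)
    [Finite N.S] (hcard : Nat.card N.S ≤ k)
    (hMN : ∀ γ ∈ E, M.outs M.start γ = N.outs N.start γ)
    {a : A.S} {β η : List I} (hη : η ∈ A.lang a) (hsat : saturated M A E sq (k + 1) (a, β))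
    (ih : ∀ γ ∈ A.lang A.start, γ.length < (β ++ η).length →
      M.outs M.start γ = N.outs N.start γ) :
    M.outs M.start (β ++ η) = N.outs N.start (β ++ η) := by
  obtain ⟨R, hRE, hRlt, hRmono, hRprec, hRpres⟩ := hsat
  obtain ⟨i, j, hij, hN⟩ :=
    Fin.exists_lt_apply_eq_of_card_le hcard fun i => N.nexts N.start (R i).2
  obtain ⟨γ, rfl, haj⟩ : ∃ γ, β = (R j).2 ++ γ ∧ a ∈ A.steps (R j).1 γ := hRprec j
  rw [List.append_assoc] at ih ⊢
  have hcompat : ¬ incompat M A (loc M (R i)) (loc M (R j)) := fun hinc =>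
    nexts_ne_of_sep M N hEpc hMN (hRpres _ ⟨i, rfl⟩ _ ⟨j, rfl⟩ hinc) hN
  have hj : γ ++ η ∈ A.lang (R j).1 := (A.append_mem_lang _ _ _).2 ⟨a, haj, hη⟩
  have hi : γ ++ η ∈ A.lang (R i).1 := hsq _ _ (hRmono i j hij.le) hj
  have hM : M.outs (M.nexts M.start (R j).2) (γ ++ η)
      = M.outs (M.nexts M.start (R i).2) (γ ++ η) := by
    by_contra hne
    exact hcompat ⟨γ ++ η, ⟨hi, hj⟩, Ne.symm hne⟩
  have hlen : (R i).2.length < (R j).2.length := by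
    obtain ⟨hpre, hne⟩ := hRlt i j hij
    exact lt_of_le_of_ne hpre.length_le fun h => hne (hpre.eq_of_length h)
  have hshort : M.outs M.start ((R i).2 ++ (γ ++ η)) = N.outs N.start ((R i).2 ++ (γ ++ η)) :=
    ih _ ((A.append_mem_lang _ _ _).2 ⟨_, (hRE i).2, hi⟩)
      (by simp only [List.length_append]; omega)
  exact M.outs_append_eq_of_nexts_eq N (hMN _ (hRE j).1) (hMN _ (hRE i).1) hshort hN.symm hM

end Agreement

theorem saturated_complete_general {I O : Type} (M : Mealy I O) (A : NFA' I)
    (E : Set (List I)) (k : ℕ)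
    (sq : A.S → A.S → Prop)
    (hsq : ∀ a b : A.S, sq a b → A.lang a ⊆ A.lang b)
    (hEpc : ∀ u v : List I, u <+: v → v ∈ E → u ∈ E)
    (hsat : ∀ α ∈ A.lang A.start \ E, ∃ β ∈ E, β <+: α ∧
      ∀ a ∈ A.steps A.start β, saturated M A E sq (k + 1) (a, β)) :
    ∀ N : Mealy I O, Finite N.S → Nat.card N.S ≤ k →
      (∀ γ ∈ E, M.outs M.start γ = N.outs N.start γ) →
      ∀ γ ∈ A.lang A.start, M.outs M.start γ = N.outs N.start γ := by
  intro N _ hcard hMN γ hγ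
  induction hlen : γ.length using Nat.strong_induction_on generalizing γ with
  | _ n ih =>
    by_cases hγE : γ ∈ E
    · exact hMN γ hγE
    obtain ⟨β, -, ⟨η, rfl⟩, hsatβ⟩ := hsat γ ⟨hγ, hγE⟩
    obtain ⟨a, ha, hη⟩ := (A.append_mem_lang _ _ _).1 hγ
    exact outs_eq_of_saturated M N hsq hEpc hcard hMN hη (hsatβ a ha)
      fun δ hδ hδlen => ih _ (hlen ▸ hδlen) δ hδ rfl

/-- Theorem 2: if every word of L_A \ E has a (k+1)-saturated prefix in E,
then E is k-complete in the context of L_A. -/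
theorem saturated_complete {I O : Type} (M : Mealy I O) (A : NFA' I)
    (E : Set (List I)) (k : ℕ)
    (sq : A.S → A.S → Prop) (hrefl : ∀ a, sq a a)
    (hsq : ∀ a b : A.S, sq a b → A.lang a ⊆ A.lang b)
    (hE : E ⊆ A.lang A.start) (hEfin : E.Finite)
    (hEpc : ∀ u v : List I, u <+: v → v ∈ E → u ∈ E)
    (hsat : ∀ α ∈ A.lang A.start \ E, ∃ β ∈ E, β <+: α ∧
      ∀ a ∈ A.steps A.start β, saturated M A E sq (k + 1) (a, β)) :
    ∀ N : Mealy I O, Finite N.S → Nat.card N.S ≤ k →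
      (∀ γ ∈ E, M.outs M.start γ = N.outs N.start γ) →
      ∀ γ ∈ A.lang A.start, M.outs M.start γ = N.outs N.start γ :=
  saturated_complete_general M A E k sq hsq hEpc hsat
end
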